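/- Let s0 > 0. Then there exists a constant C (depending only on s0) such that for all s ≥ s0, ∫_{-∞}^{0} (Φ'(z-s) - Φ'(z))² / ( (Φ(z) - Φ(z-s)) · (Φ(-z) + Φ(z-s)) ) dz ≤ C. -/

import Mathlib

open MeasureTheory Real Set Filter

/-- The standard normal density `Φ'(z) = (1/√(2π)) e^{-z²/2}`. -/
noncomputable def Φ' (z : ℝ) : ℝ := (Real.sqrt (2 * Real.pi))⁻¹ * Real.exp (-z ^ 2 / 2)

/-- The standard normal cumulative distribution function `Φ`. -/
noncomputable def Φ (z : ℝ) : ℝ := ∫ u in Set.Iic z, Φ' u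

/-!
For `z ≤ 0` and `s ≥ s₀` the numerator is at most `Φ'(z)²`, since `0 < Φ'(z - s) ≤ Φ'(z)`.
The first denominator factor is at least `s₀ Φ'(z - s₀)`, the mass of the density on
`(z - s₀, z]`, where it is at least its value at the left end point; the second one is at least
`Φ(0)`. Since `Φ'(z)² = e^{s₀²} Φ'(z + s₀) Φ'(z - s₀)`, the integrand is dominated, uniformly
in `s`, by the integrable Gaussian `e^{s₀²} Φ'(z + s₀) / (s₀ Φ(0))`.
-/

lemma Φ'_eq_gaussianPDFReal : Φ' = ProbabilityTheory.gaussianPDFReal 0 1 := by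
  ext z
  simp [Φ', ProbabilityTheory.gaussianPDFReal]

lemma Φ'_pos (z : ℝ) : 0 < Φ' z := by
  unfold Φ'
  positivity

lemma continuous_Φ' : Continuous Φ' := by
  unfold Φ'
  fun_prop

lemma integrable_Φ' : Integrable Φ' :=
  Φ'_eq_gaussianPDFReal ▸ ProbabilityTheory.integrable_gaussianPDFReal 0 1

lemma monotoneOn_Φ' : MonotoneOn Φ' (Iic 0) := by
  intro a ha b hb hab
  unfold Φ'
  gcongr _ * exp ?_
  nlinarith [mem_Iic.1 hb]

lemma Φ'_sq (z a : ℝ) : Φ' z ^ 2 = exp (a ^ 2) * Φ' (z + a) * Φ' (z - a) := by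
  have h2π : sqrt (2 * π) ^ 2 = 2 * π := sq_sqrt (by positivity)
  have hexp : exp (-z ^ 2 / 2) ^ 2 =
      exp (a ^ 2) * exp (-(z + a) ^ 2 / 2) * exp (-(z - a) ^ 2 / 2) := by
    rw [← exp_nat_mul, ← exp_add, ← exp_add]
    congr 1
    push_cast
    ring
  simp only [Φ', mul_pow, inv_pow, hexp]
  ring

lemma Φ_sub_Φ {a b : ℝ} (hab : a ≤ b) : Φ b - Φ a = ∫ u in Ioc a b, Φ' u := by
  rw [Φ, Φ, intervalIntegral.integral_Iic_sub_Iic integrable_Φ'.integrableOn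
    integrable_Φ'.integrableOn, intervalIntegral.integral_of_le hab]

lemma Φ_nonneg (z : ℝ) : 0 ≤ Φ z :=
  setIntegral_nonneg measurableSet_Iic fun u _ => (Φ'_pos u).le

lemma monotone_Φ : Monotone Φ := by
  intro a b hab
  have : 0 ≤ ∫ u in Ioc a b, Φ' u :=
    setIntegral_nonneg measurableSet_Ioc fun u _ => (Φ'_pos u).le
  linarith [Φ_sub_Φ hab]

lemma mul_Φ'_le_Φ_sub_Φ {z t : ℝ} (hz : z ≤ 0) (ht : 0 ≤ t) :
    t * Φ' (z - t) ≤ Φ z - Φ (z - t) := by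
  rw [Φ_sub_Φ (by linarith)]
  have hlen : volume.real (Ioc (z - t) z) = t := by
    rw [Real.volume_real_Ioc_of_le (by linarith)]
    ring
  calc t * Φ' (z - t) = Φ' (z - t) * volume.real (Ioc (z - t) z) := by rw [hlen, mul_comm]
    _ ≤ ∫ u in Ioc (z - t) z, Φ' u :=
      setIntegral_ge_of_const_le_real measurableSet_Ioc (by simp)
        (fun u hu => monotoneOn_Φ' (mem_Iic.2 (by linarith)) (mem_Iic.2 (hu.2.trans hz)) hu.1.le)
        integrable_Φ'.integrableOn

lemma Φ_zero_pos : 0 < Φ 0 := by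
  have h := mul_Φ'_le_Φ_sub_Φ le_rfl zero_le_one
  linarith [Φ'_pos (0 - 1), Φ_nonneg (0 - 1)]

noncomputable def shiftRatio (s z : ℝ) : ℝ :=
  (Φ' (z - s) - Φ' z) ^ 2 / ((Φ z - Φ (z - s)) * (Φ (-z) + Φ (z - s)))

lemma measurable_shiftRatio (s : ℝ) : Measurable (shiftRatio s) := by
  have := monotone_Φ.measurable
  have := continuous_Φ'.measurable
  unfold shiftRatio
  fun_prop

lemma mul_le_shiftRatio_denom {s₀ s z : ℝ} (hs₀ : 0 ≤ s₀) (hs : s₀ ≤ s) (hz : z ≤ 0) :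
    s₀ * Φ' (z - s₀) * Φ 0 ≤ (Φ z - Φ (z - s)) * (Φ (-z) + Φ (z - s)) := by
  have h₁ : s₀ * Φ' (z - s₀) ≤ Φ z - Φ (z - s) := by
    linarith [mul_Φ'_le_Φ_sub_Φ hz hs₀, monotone_Φ (by linarith : z - s ≤ z - s₀)]
  have h₂ : Φ 0 ≤ Φ (-z) + Φ (z - s) := by
    linarith [monotone_Φ (by linarith : (0 : ℝ) ≤ -z), Φ_nonneg (z - s)]
  exact mul_le_mul h₁ h₂ Φ_zero_pos.le (by linarith [mul_nonneg hs₀ (Φ'_pos (z - s₀)).le])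

lemma shiftRatio_nonneg_and_le {s₀ s z : ℝ} (hs₀ : 0 < s₀) (hs : s₀ ≤ s) (hz : z ≤ 0) :
    0 ≤ shiftRatio s z ∧ shiftRatio s z ≤ exp (s₀ ^ 2) / (s₀ * Φ 0) * Φ' (z + s₀) := by
  have hden := mul_le_shiftRatio_denom hs₀.le hs hz
  have hpos : 0 < s₀ * Φ' (z - s₀) * Φ 0 := by
    have := Φ'_pos (z - s₀)
    have := Φ_zero_pos
    positivity
  have hnum : (Φ' (z - s) - Φ' z) ^ 2 ≤ Φ' z ^ 2 := by
    have hle : Φ' (z - s) ≤ Φ' z :=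
      monotoneOn_Φ' (mem_Iic.2 (by linarith)) (mem_Iic.2 hz) (by linarith)
    nlinarith [Φ'_pos (z - s)]
  refine ⟨div_nonneg (sq_nonneg _) (hpos.le.trans hden), ?_⟩
  calc shiftRatio s z ≤ Φ' z ^ 2 / (s₀ * Φ' (z - s₀) * Φ 0) :=
        div_le_div₀ (sq_nonneg _) hnum hpos hden
    _ = exp (s₀ ^ 2) / (s₀ * Φ 0) * Φ' (z + s₀) := by
        have := (Φ'_pos (z - s₀)).ne'
        rw [Φ'_sq z s₀]
        field_simp

/-- the integrals over `(-∞, 0)` are uniformly bounded for `s ≥ s0 > 0`. -/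
theorem uniform_bound_Iio (s0 : ℝ) (hs0 : 0 < s0) :
    ∃ C : ℝ, ∀ s : ℝ, s0 ≤ s →
      IntegrableOn (fun z : ℝ =>
        (Φ' (z - s) - Φ' z) ^ 2 / ((Φ z - Φ (z - s)) * (Φ (-z) + Φ (z - s))))
        (Set.Iio 0) volume ∧
      (∫ z in Set.Iio (0:ℝ),
        (Φ' (z - s) - Φ' z) ^ 2 / ((Φ z - Φ (z - s)) * (Φ (-z) + Φ (z - s)))) ≤ C := by
  set G : ℝ → ℝ := fun z => exp (s0 ^ 2) / (s0 * Φ 0) * Φ' (z + s0)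
  have hG : IntegrableOn G (Iio 0) :=
    ((integrable_Φ'.comp_add_right s0).const_mul _).integrableOn
  refine ⟨∫ z in Iio 0, G z, fun s hs => ?_⟩
  have hbound : ∀ z ∈ Iio (0 : ℝ), 0 ≤ shiftRatio s z ∧ shiftRatio s z ≤ G z :=
    fun z hz => shiftRatio_nonneg_and_le hs0 hs (le_of_lt hz)
  have hint : IntegrableOn (shiftRatio s) (Iio 0) := by
    refine hG.mono' (measurable_shiftRatio s).aestronglyMeasurable ?_
    filter_upwards [self_mem_ae_restrict measurableSet_Iio] with z hz
    rw [norm_of_nonneg (hbound z hz).1]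
    exact (hbound z hz).2
  exact ⟨hint, setIntegral_mono_on hint hG measurableSet_Iio fun z hz => (hbound z hz).2⟩
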